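/- If G is a connected graph on n vertices that contains no heavy cycle, then G has at most two heavy vertices. -/

import Mathlib

/-!
Any two heavy vertices have degree sum at least `n`, so it suffices to find a cycle through a set
`S` of at least three vertices satisfying Ore's condition. This is the Bondy–Chvátal closure
argument restricted to `S`: adding an edge `xy` between non-adjacent `x, y ∈ S` with
`d(x) + d(y) ≥ n` does not create a cycle through `S`. Indeed, a cycle through `S` in `G + xy`
that uses `xy` leaves an `x`–`y` path `P` in `G` covering `S`, and counting shows that either `x`
and `y` have a common neighbour off `P`, or `P` has an edge `v v⁺` with `v ~ y` and `v⁺ ~ x`; in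
both cases `P` closes up to a cycle. Adding all such edges makes `S` a clique, which lies on a
cycle since `|S| ≥ 3`.
-/

open Finset

namespace SimpleGraph

variable {V : Type*} {G : SimpleGraph V}

def HasCycleThrough (G : SimpleGraph V) (S : Set V) : Prop :=
  ∃ (a : V) (c : G.Walk a a), c.IsCycle ∧ ∀ v ∈ S, v ∈ c.support

lemma HasCycleThrough.mono {S T : Set V} (h : G.HasCycleThrough T) (hST : S ⊆ T) :
    G.HasCycleThrough S :=
  let ⟨a, c, hc, hT⟩ := h
  ⟨a, c, hc, fun v hv => hT v (hST hv)⟩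

lemma exists_adj_adj_perm [Fintype V] [DecidableEq V] [DecidableRel G.Adj] (σ : Equiv.Perm V)
    {x y : V} (hσ : σ y = x) (hdeg : Fintype.card V ≤ G.degree x + G.degree y) :
    ∃ v, G.Adj y v ∧ G.Adj x (σ v) := by
  have hx : G.neighborFinset x ⊆ univ.erase x := fun v hv =>
    mem_erase.2 ⟨((G.mem_neighborFinset x v).1 hv).ne', mem_univ v⟩
  have hy : (G.neighborFinset y).map σ.toEmbedding ⊆ univ.erase x := by
    intro v hv
    obtain ⟨u, hu, rfl⟩ := mem_map.1 hv
    refine mem_erase.2 ⟨fun hux => ?_, mem_univ _⟩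
    rw [← hσ] at hux
    exact ((G.mem_neighborFinset y u).1 hu).ne' (σ.injective hux)
  have hcard : #(univ.erase x) <
      #(G.neighborFinset x) + #((G.neighborFinset y).map σ.toEmbedding) := by
    rw [card_erase_of_mem (mem_univ x), card_univ, card_map, card_neighborFinset_eq_degree,
      card_neighborFinset_eq_degree]
    have := Fintype.card_pos_iff.2 ⟨x⟩
    omega
  obtain ⟨v, hv⟩ := inter_nonempty_of_card_lt_card_add_card hx hy hcard
  obtain ⟨hvx, hvy⟩ := mem_inter.1 hv
  obtain ⟨u, hu, rfl⟩ := mem_map.1 hvy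
  exact ⟨u, (G.mem_neighborFinset y u).1 hu, (G.mem_neighborFinset x _).1 hvx⟩

namespace Walk

lemma IsPath.isCycle_cons {u v : V} {p : G.Walk v u} (hp : p.IsPath) (h : G.Adj u v)
    (hl : 2 ≤ p.length) : (cons h p).IsCycle :=
  isCycle_iff_isPath_tail_and_le_length.mpr ⟨by simpa, by simpa⟩

lemma IsPath.hasCycleThrough_support_of_adj {u v : V} {p : G.Walk v u} (hp : p.IsPath)
    (h : G.Adj u v) (hl : 2 ≤ p.length) : G.HasCycleThrough {w | w ∈ p.support} :=
  ⟨u, cons h p, hp.isCycle_cons h hl, fun _ hw => List.mem_cons_of_mem u hw⟩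

lemma IsPath.append_cons_reverse {x v w y : V} {q : G.Walk x v} {h : G.Adj v w}
    {r : G.Walk w y} (hp : (q.append (cons h r)).IsPath) (h' : G.Adj v y) :
    (q.append (cons h' r.reverse)).IsPath := by
  refine IsPath.mk' ?_
  have hnd := hp.support_nodup
  simp only [support_append, support_cons, List.tail_cons, support_reverse] at hnd ⊢
  exact ((List.perm_append_left_iff _).mpr (List.reverse_perm _)).nodup_iff.mpr hnd

lemma formPerm_support_append_cons_apply [DecidableEq V] {x v w y : V} (q : G.Walk x v)
    (h : G.Adj v w) (r : G.Walk w y) (hp : (q.append (cons h r)).support.Nodup) :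
    (q.append (cons h r)).support.formPerm v = w := by
  have hsupp : (q.append (cons h r)).support =
      q.support.dropLast ++ v :: w :: r.support.tail := by
    rw [support_append, support_cons, List.tail_cons]
    nth_rw 1 [← q.dropLast_support_concat, ← r.cons_tail_support]
    simp only [List.append_assoc, List.cons_append, List.nil_append]
  rw [hsupp] at hp ⊢
  simpa using List.formPerm_apply_lt_getElem _ hp q.support.dropLast.length (by simp)

lemma formPerm_support_apply_end [DecidableEq V] {x y : V} (p : G.Walk x y) :
    p.support.formPerm y = x := by
  cases p with
  | nil => simp
  | cons h q => simpa [q.getLast_support] using List.formPerm_apply_getLast x q.support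

lemma IsCycle.exists_isPath_snd {x : V} {c : G.Walk x x} (hc : c.IsCycle) :
    ∃ p : G.Walk x c.snd, p.IsPath ∧ s(x, c.snd) ∉ p.edges ∧
      ∀ v ∈ c.support, v ∈ p.support := by
  cases c with
  | nil => exact absurd hc not_isCycle_nil
  | cons h t =>
    obtain ⟨ht, hxt⟩ := (cons_isCycle_iff t h).1 hc
    rw [snd_cons]
    refine ⟨t.reverse, ht.reverse, by simpa using hxt, fun v hv => ?_⟩
    rcases List.mem_cons.1 hv with rfl | hv
    · exact t.reverse.start_mem_support
    · simpa using hv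

lemma IsCycle.exists_isPath_of_mem_edges_start {x y : V} {c : G.Walk x x} (hc : c.IsCycle)
    (he : s(x, y) ∈ c.edges) :
    ∃ p : G.Walk x y, p.IsPath ∧ s(x, y) ∉ p.edges ∧
      ∀ v ∈ c.support, v ∈ p.support := by
  rw [← c.cons_tail_eq hc.not_nil, edges_cons, List.mem_cons] at he
  rcases he with he | he
  · obtain rfl : y = c.snd := Sym2.congr_right.1 he
    exact hc.exists_isPath_snd
  · have hy : y = c.reverse.snd := by
      rw [snd_reverse, hc.isPath_tail.eq_penultimate_of_mem_edges he]
      have := hc.three_le_length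
      simp only [penultimate, getVert_tail, length_tail]
      congr 1
      omega
    subst hy
    obtain ⟨p, hp, hpe, hcp⟩ := hc.reverse.exists_isPath_snd
    exact ⟨p, hp, hpe, fun v hv => hcp v (by simpa using hv)⟩

lemma IsCycle.exists_isPath_of_mem_edges {u x y : V} {c : G.Walk u u} (hc : c.IsCycle)
    (he : s(x, y) ∈ c.edges) :
    ∃ p : G.Walk x y, p.IsPath ∧ s(x, y) ∉ p.edges ∧
      ∀ v ∈ c.support, v ∈ p.support := by
  classical
  have hx := c.fst_mem_support_of_mem_edges he
  obtain ⟨p, hp, hpe, hcp⟩ := (hc.rotate hx).exists_isPath_of_mem_edges_start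
    ((c.rotate_edges x hx).perm.mem_iff.2 he)
  exact ⟨p, hp, hpe, fun v hv => hcp v ((c.mem_support_rotate_iff x hx).2 hv)⟩

theorem IsPath.hasCycleThrough_support_of_degree [Fintype V] [DecidableRel G.Adj] {x y : V}
    {p : G.Walk x y} (hp : p.IsPath) (hxy : x ≠ y) (hadj : ¬G.Adj x y)
    (hdeg : Fintype.card V ≤ G.degree x + G.degree y) :
    G.HasCycleThrough {v | v ∈ p.support} := by
  classical
  have hlen : 2 ≤ p.length := by
    by_contra! h
    interval_cases hl : p.length
    · exact hxy (eq_of_length_eq_zero hl)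
    · exact hadj (adj_of_length_eq_one hl)
  -- `p.support.formPerm` is the successor map along `p`, closed up by `y ↦ x`.
  obtain ⟨v, hyv, hxv⟩ := exists_adj_adj_perm _ p.formPerm_support_apply_end hdeg
  by_cases hv : v ∈ p.support
  · obtain ⟨q, r', -, -, rfl⟩ := hp.mem_support_iff_exists_append.mp hv
    cases r' with
    | nil => exact (G.irrefl hyv).elim
    | cons h r =>
      rw [formPerm_support_append_cons_apply q h r hp.support_nodup] at hxv
      refine ((hp.append_cons_reverse hyv.symm).hasCycleThrough_support_of_adj hxv.symm ?_).mono ?_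
      · simpa using hlen
      · intro w hw
        simpa only [Set.mem_ofPred_eq, support_append, support_cons, List.tail_cons,
          support_reverse, List.mem_append, List.mem_reverse] using hw
  · rw [List.formPerm_apply_of_notMem hv] at hxv
    have hlen' : 2 ≤ (p.concat hyv).length := by rw [length_concat]; omega
    refine ((hp.concat hv hyv).hasCycleThrough_support_of_adj hxv.symm hlen').mono ?_
    exact fun w hw => p.support_concat hyv ▸ List.mem_append_left _ hw

end Walk

lemma mem_edgeSet_of_mem_edgeSet_sup_edge {x y : V} {e : Sym2 V}
    (he : e ∈ (G ⊔ edge x y).edgeSet) (hne : e ≠ s(x, y)) : e ∈ G.edgeSet := by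
  rw [edgeSet_sup] at he
  exact he.resolve_right fun h => hne (edgeSet_edge_subset h)

theorem HasCycleThrough.of_sup_edge [Fintype V] [DecidableRel G.Adj] {S : Set V} {x y : V}
    (h : (G ⊔ edge x y).HasCycleThrough S) (hxy : x ≠ y) (hadj : ¬G.Adj x y)
    (hdeg : Fintype.card V ≤ G.degree x + G.degree y) : G.HasCycleThrough S := by
  obtain ⟨a, c, hc, hS⟩ := h
  by_cases he : s(x, y) ∈ c.edges
  · obtain ⟨p, hp, hpe, hcp⟩ := hc.exists_isPath_of_mem_edges he
    have hpG : ∀ e ∈ p.edges, e ∈ G.edgeSet := fun e hep =>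
      mem_edgeSet_of_mem_edgeSet_sup_edge (p.edges_subset_edgeSet hep)
        (ne_of_mem_of_not_mem hep hpe)
    refine ((hp.transfer hpG).hasCycleThrough_support_of_degree hxy hadj hdeg).mono fun v hv => ?_
    simpa using hcp v (hS v hv)
  · have hcG : ∀ e ∈ c.edges, e ∈ G.edgeSet := fun e hec =>
      mem_edgeSet_of_mem_edgeSet_sup_edge (c.edges_subset_edgeSet hec)
        (ne_of_mem_of_not_mem hec he)
    exact ⟨a, c.transfer G hcG, hc.transfer hcG, fun v hv => by simpa using hS v hv⟩

theorem hasCycleThrough_of_isClique {S : Finset V} (hS : 3 ≤ #S) (hc : G.IsClique (S : Set V)) :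
    G.HasCycleThrough S := by
  obtain ⟨k, hk⟩ : ∃ k, #S = k + 3 := ⟨#S - 3, by omega⟩
  let e : Fin (k + 3) ≃ S := (S.equivFin.trans (finCongr hk)).symm
  have he : Function.Injective fun i => (e i : V) := Subtype.val_injective.comp e.injective
  let f : cycleGraph (k + 3) →g G :=
    ⟨fun i => e i, fun hij => hc (e _).2 (e _).2 (he.ne hij.ne)⟩
  refine ⟨_, (cycleGraph.cycle k).map f,
    (Walk.isCycle_map_iff_of_injective he).2 cycleGraph.isCycle_cycle, fun v hv => ?_⟩
  obtain ⟨i, hvi⟩ : ∃ i, e i = ⟨v, hv⟩ := e.surjective _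
  rw [Walk.support_map, List.mem_map]
  refine ⟨i, ?_, congrArg Subtype.val hvi⟩
  have hi : (cycleGraph.cycle k).getVert (k + 3 - i) = i := by
    rw [cycleGraph.getVert_cycle (by omega)]
    ext
    simp [Nat.sub_sub_self i.isLt.le, Nat.mod_eq_of_lt i.isLt]
  exact hi ▸ (cycleGraph.cycle k).getVert_mem_support _

theorem hasCycleThrough_of_ore [Fintype V] [DecidableRel G.Adj] {S : Finset V} (hS : 3 ≤ #S)
    (hore : ∀ x ∈ S, ∀ y ∈ S, x ≠ y → ¬G.Adj x y →
      Fintype.card V ≤ G.degree x + G.degree y) :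
    G.HasCycleThrough S := by
  classical
  suffices ∀ H, G ≤ H → H.HasCycleThrough S from this G le_rfl
  intro H
  induction H using WellFoundedGT.induction with
  | _ H ih =>
  intro hGH
  by_cases hcl : H.IsClique (S : Set V)
  · exact hasCycleThrough_of_isClique hS hcl
  obtain ⟨x, hx, y, hy, hxy, hadj⟩ : ∃ x ∈ S, ∃ y ∈ S, x ≠ y ∧ ¬H.Adj x y := by
    simpa [IsClique, Set.Pairwise] using hcl
  refine (ih _ (H.lt_sup_edge x y hxy hadj) (hGH.trans le_sup_left)).of_sup_edge hxy hadj ?_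
  calc Fintype.card V ≤ G.degree x + G.degree y := hore x hx y hy hxy fun h => hadj (hGH h)
    _ ≤ H.degree x + H.degree y := add_le_add (degree_le_of_le hGH) (degree_le_of_le hGH)

end SimpleGraph

open SimpleGraph

theorem stmt_2_general {V : Type*} [Fintype V] (G : SimpleGraph V)
    [DecidableRel G.Adj]
    (hnoheavy : ¬ ∃ (a : V) (c : G.Walk a a), c.IsCycle ∧
      ∀ v : V, Fintype.card V ≤ 2 * G.degree v → v ∈ c.support) :
    (Finset.univ.filter (fun v : V => Fintype.card V ≤ 2 * G.degree v)).card ≤ 2 := by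
  by_contra! h
  refine hnoheavy ((hasCycleThrough_of_ore h fun x hx y hy _ _ => ?_).mono fun v hv => ?_)
  · simp only [Finset.mem_filter, Finset.mem_univ, true_and] at hx hy
    omega
  · exact Finset.mem_filter.2 ⟨Finset.mem_univ v, hv⟩

theorem stmt_2 {V : Type*} [Fintype V] [DecidableEq V] (G : SimpleGraph V)
    [DecidableRel G.Adj] (hconn : G.Connected)
    (hnoheavy : ¬ ∃ (a : V) (c : G.Walk a a), c.IsCycle ∧
      ∀ v : V, Fintype.card V ≤ 2 * G.degree v → v ∈ c.support) :
    (Finset.univ.filter (fun v : V => Fintype.card V ≤ 2 * G.degree v)).card ≤ 2 :=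
  stmt_2_general G hnoheavy
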